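/- arXiv:1702.05141 — 3 statements merged into one kernel-verified Lean document; each statement's English description precedes it below -/
import Mathlib

section
/- Let M be a loopless matroid on a finite nonempty ground set E and let x ∈ ℝ^E. Then C(x), the set of M-ultrametrics l∞-nearest to x, is nonempty, and there exists a nonempty finite set V ⊆ ℝ^E with C(x) = tconv(V); in particular, C(x) is a tropical polytope. -/
variable {α : Type*}

/-- The weight of a set `B` with respect to `w`. -/
noncomputable def bweight (w : α → ℝ) (B : Set α) : ℝ := ∑ᶠ e ∈ B, w e

/-- `B` is a `w`-minimum basis of `M`. -/
def MinBase (M : Matroid α) (w : α → ℝ) (B : Set α) : Prop :=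
  M.IsBase B ∧ ∀ B', M.IsBase B' → bweight w B ≤ bweight w B'

/-- `w` is an `M`-ultrametric: every ground element lies in some `w`-minimum basis. -/
def MUltrametric (M : Matroid α) (w : α → ℝ) : Prop :=
  ∀ e ∈ M.E, ∃ B, MinBase M w B ∧ e ∈ B

/-- The `l∞`-distance `‖x - y‖∞ = max_e |x e - y e|`. -/
noncomputable def linf [Fintype α] [Nonempty α] (x y : α → ℝ) : ℝ :=
  Finset.univ.sup' Finset.univ_nonempty fun e => |x e - y e|

/-- `C(x)`: the set of `M`-ultrametrics that are `l∞`-nearest to `x`. -/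
def CSet [Fintype α] [Nonempty α] (M : Matroid α) (x : α → ℝ) : Set (α → ℝ) :=
  {w | MUltrametric M w ∧ ∀ u, MUltrametric M u → linf x w ≤ linf x u}

/-- The tropical convex hull of a nonempty finite set `V ⊆ ℝ^E`. -/
def tconv (V : Finset (α → ℝ)) (hV : V.Nonempty) : Set (α → ℝ) :=
  {w | ∃ lam : (α → ℝ) → ℝ, V.sup' hV lam = 0 ∧
    ∀ e, w e = V.sup' hV fun v => lam v + v e}

/-!
An `M`-ultrametric is exactly a weight `w` such that no `e` is spanned by the elements strictly
lighter than `e` (exchange with a minimum basis, resp. with a fundamental circuit). This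
condition depends only on the order of the values of `w`, is closed, and is preserved by
`max (u, c + v)`. Hence the ultrametrics form a nonempty closed set, and `C(x)` is its
intersection with the closed `l∞`-ball around `x` whose radius `d` is the distance from `x` to
that set, i.e. with the box `[x - d, x + d]`; this intersection is tropically convex. Every `w`
in it is the tropical combination of the order-compatible functions
`g ↦ max {x h - d | w h ≤ w g}` and, for each `e`, its modification raised to
`min {x h + d | w e ≤ w h}` on `{g | w e ≤ w g}`; these take values in the finite set
`{x h ± d}`, so finitely many of them generate `C(x)`.
-/

open Set Finset

section Matroid

variable {M : Matroid α} {w : α → ℝ}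

def ClosureUltrametric (M : Matroid α) (w : α → ℝ) : Prop :=
  ∀ e, e ∉ M.closure {f | w f < w e}

lemma bweight_exchange_add {B : Set α} (hB : B.Finite) {e f : α} (he : e ∈ B) (hf : f ∉ B) :
    bweight w (insert f (B \ {e})) + w e = bweight w B + w f := by
  unfold bweight
  rw [finsum_mem_insert _ (fun h => hf h.1) (hB.subset sdiff_subset),
    ← finsum_mem_add_sdiff (singleton_subset_iff.2 he) hB, finsum_mem_singleton]
  ring

lemma MinBase.le_of_exchange [Finite α] {B : Set α} (hB : MinBase M w B) {e f : α} (he : e ∈ B)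
    (hf : f ∉ B) (hB' : M.IsBase (insert f (B \ {e}))) : w e ≤ w f := by
  have := hB.2 _ hB'
  linarith [bweight_exchange_add (w := w) B.toFinite he hf]

lemma MUltrametric.closureUltrametric [Finite α] (hw : MUltrametric M w) :
    ClosureUltrametric M w := by
  intro e hecl
  obtain ⟨B, hB, heB⟩ := hw e (M.closure_subset_ground _ hecl)
  have hlighter : ¬ {f | w f < w e} ∩ M.E ⊆ M.closure (B \ {e}) := fun hsub =>
    hB.1.indep.notMem_closure_sdiff_of_mem heB <| M.closure_subset_closure_of_subset_closure hsub
      (by rwa [M.closure_inter_ground])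
  obtain ⟨f, ⟨hfe : w f < w e, hfE⟩, hfcl⟩ := not_subset.1 hlighter
  have hfB : f ∉ B := fun hfB =>
    hfcl <| M.subset_closure _ (sdiff_subset.trans hB.1.subset_ground)
      ⟨hfB, fun h => hfe.ne (congrArg w h)⟩
  exact not_le.2 hfe (hB.le_of_exchange heB hfB (hB.1.exchange_base_of_notMem_closure heB hfcl))

lemma ClosureUltrametric.mUltrametric [Finite α] (hw : ClosureUltrametric M w) :
    MUltrametric M w := by
  intro e heE
  obtain ⟨B, hB, hBmin⟩ := exists_min_image {B | M.IsBase B} (bweight w) (toFinite _)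
    M.exists_isBase
  by_cases heB : e ∈ B
  · exact ⟨B, ⟨hB, hBmin⟩, heB⟩
  -- `e` is spanned by the rest of its fundamental circuit in `B`, so that circuit contains an
  -- element at least as heavy as `e`, and exchanging the two keeps the basis minimal
  have hC := hB.fundCircuit_isCircuit heE heB
  obtain ⟨f, ⟨hfC, hfe⟩, hwf⟩ : ∃ f ∈ M.fundCircuit e B \ {e}, ¬ w f < w e :=
    not_subset.1 fun hsub => hw e <|
      M.closure_subset_closure hsub (hC.mem_closure_sdiff_singleton_of_mem (M.mem_fundCircuit e B))
  have hfB : f ∈ B := ((M.fundCircuit_subset_insert e B) hfC).resolve_left hfe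
  have hB' : M.IsBase (insert e B \ {f}) := hB.exchange_isBase_of_indep' hfB heB <|
    (hB.indep.mem_fundCircuit_iff (by rw [hB.closure_eq]; exact heE) heB).1 hfC
  rw [← insert_sdiff_singleton_comm (ne_of_mem_of_not_mem hfB heB).symm] at hB'
  refine ⟨_, ⟨hB', fun B'' hB'' => ?_⟩, mem_insert _ _⟩
  linarith [bweight_exchange_add (w := w) B.toFinite hfB heB, hBmin B'' hB'', not_lt.1 hwf]

lemma mUltrametric_iff_closureUltrametric [Finite α] :
    MUltrametric M w ↔ ClosureUltrametric M w :=
  ⟨MUltrametric.closureUltrametric, ClosureUltrametric.mUltrametric⟩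

end Matroid

namespace ClosureUltrametric

variable {M : Matroid α} {w v : α → ℝ}

lemma of_le_imp_le (hw : ClosureUltrametric M w) (hwv : ∀ a b, w a ≤ w b → v a ≤ v b) :
    ClosureUltrametric M v := fun e hecl =>
  hw e <| M.closure_subset_closure (fun f hf => lt_of_not_ge fun h => (hwv e f h).not_gt hf) hecl

lemma const_add (hw : ClosureUltrametric M w) (c : ℝ) :
    ClosureUltrametric M fun f => c + w f :=
  hw.of_le_imp_le fun _ _ h => by linarith

lemma sup (hw : ClosureUltrametric M w) (hv : ClosureUltrametric M v) :
    ClosureUltrametric M fun f => max (w f) (v f) := by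
  intro e hecl
  rcases max_choice (w e) (v e) with he | he
  · refine hw e (M.closure_subset_closure (fun f hf => ?_) hecl)
    exact (le_max_left (w f) (v f)).trans_lt (he ▸ hf)
  · refine hv e (M.closure_subset_closure (fun f hf => ?_) hecl)
    exact (le_max_right (w f) (v f)).trans_lt (he ▸ hf)

lemma const (hloop : ∀ e, M.Indep {e}) (c : ℝ) : ClosureUltrametric M fun _ => c := by
  intro e
  simpa using (hloop e).notMem_closure_sdiff_of_mem (mem_singleton e)

lemma iff_forall_mem_closure :
    ClosureUltrametric M w ↔ ∀ e X, e ∈ M.closure X → ∃ f ∈ X, w e ≤ w f := by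
  refine ⟨fun h e X heX => ?_, fun h e hecl => ?_⟩
  · by_contra! hX
    exact h e (M.closure_subset_closure hX heX)
  · obtain ⟨f, hf, hle⟩ := h e _ hecl
    exact hle.not_gt hf

end ClosureUltrametric

lemma isClosed_setOf_closureUltrametric [Finite α] (M : Matroid α) :
    IsClosed {w : α → ℝ | ClosureUltrametric M w} := by
  have : {w : α → ℝ | ClosureUltrametric M w} =
      ⋂ e, ⋂ X ∈ {X | e ∈ M.closure X}, ⋃ f ∈ X, {w | w e ≤ w f} := by
    ext w
    simp [ClosureUltrametric.iff_forall_mem_closure]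
  rw [this]
  exact isClosed_iInter fun e => isClosed_biInter fun X _ =>
    X.toFinite.isClosed_biUnion fun f _ => isClosed_le (continuous_apply e) (continuous_apply f)

def TropConvex (T : Set (α → ℝ)) : Prop :=
  ∀ u ∈ T, ∀ v ∈ T, ∀ c ≤ (0 : ℝ), (fun f => max (u f) (c + v f)) ∈ T

lemma TropConvex.tconv_subset {T : Set (α → ℝ)} (hT : TropConvex T) {V : Finset (α → ℝ)}
    (hV : V.Nonempty) (hVT : ↑V ⊆ T) : tconv V hV ⊆ T := by
  rintro w ⟨lam, hlam, hw⟩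
  obtain ⟨v₀, hv₀, hlam₀⟩ := V.exists_mem_eq_sup' hV lam
  have hlam_le (v) (hv : v ∈ V) : lam v ≤ 0 := hlam ▸ V.le_sup' lam hv
  -- `v₀` enters `w` with coefficient `0`, so it can be merged into every term
  have hw' : w = V.sup' hV fun v f => max (v₀ f) (lam v + v f) := by
    ext f
    rw [Finset.sup'_apply, hw f]
    refine le_antisymm (sup'_mono_fun fun v _ => le_max_right _ _) ?_
    refine sup'_le _ _ fun v _ => max_le ?_ (V.le_sup' (fun v => lam v + v f) ‹_›)
    simpa only [← hlam₀, hlam, zero_add] using V.le_sup' (fun v => lam v + v f) hv₀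
  rw [hw']
  refine sup'_induction hV _ (fun u hu v hv => ?_) fun v hv =>
    hT _ (hVT hv₀) _ (hVT hv) _ (hlam_le v hv)
  simpa [← Pi.sup_def] using hT u hu v hv 0 le_rfl

lemma mem_tconv_of_forall_exists_le [Fintype α] [Nonempty α] {V : Finset (α → ℝ)}
    (hV : V.Nonempty) {w : α → ℝ} (hlow : ∃ v ∈ V, v ≤ w)
    (htouch : ∀ f, ∃ v ∈ V, ∃ c ≤ (0 : ℝ), (∀ g, c + v g ≤ w g) ∧ c + v f = w f) :
    w ∈ tconv V hV := by
  -- the largest admissible coefficient of `v`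
  set lam : (α → ℝ) → ℝ := fun v => min 0 (univ.inf' univ_nonempty fun g => w g - v g)
  have lam_add_le (v g) : lam v + v g ≤ w g := by
    have := min_le_right 0 _ |>.trans (univ.inf'_le (fun g => w g - v g) (mem_univ g))
    linarith
  have le_lam {v c} (hc : c ≤ 0) (hcv : ∀ g, c + v g ≤ w g) : c ≤ lam v :=
    le_min hc (le_inf' _ _ fun g _ => by linarith [hcv g])
  refine ⟨lam, le_antisymm (sup'_le _ _ fun v _ => min_le_left _ _) ?_, fun f => ?_⟩
  · obtain ⟨v, hv, hvw⟩ := hlow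
    exact (le_lam le_rfl fun g => by simpa using hvw g).trans (le_sup' lam hv)
  · obtain ⟨v, hv, c, hc, hcv, hcf⟩ := htouch f
    refine le_antisymm ?_ (sup'_le _ _ fun v _ => lam_add_le v f)
    calc w f = c + v f := hcf.symm
      _ ≤ lam v + v f := by linarith [le_lam hc hcv]
      _ ≤ _ := le_sup' (fun v => lam v + v f) hv

section Generators

variable [Fintype α] (lo hi w : α → ℝ)

noncomputable def lowerGen (f : α) : ℝ :=
  (univ.filter fun g => w g ≤ w f).sup' ⟨f, by simp⟩ lo

noncomputable def upperGen (e : α) : ℝ :=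
  (univ.filter fun g => w e ≤ w g).inf' ⟨e, by simp⟩ hi

noncomputable def vertexGen (e f : α) : ℝ :=
  if w e ≤ w f then max (lowerGen lo w f) (upperGen hi w e) else lowerGen lo w f

variable {lo hi w}

lemma le_lowerGen (f : α) : lo f ≤ lowerGen lo w f :=
  le_sup' lo (by simp)

lemma lowerGen_le (hw : lo ≤ w) (f : α) : lowerGen lo w f ≤ w f :=
  sup'_le _ _ fun g hg => (hw g).trans (by simpa using hg)

lemma lowerGen_mono {a b : α} (hab : w a ≤ w b) : lowerGen lo w a ≤ lowerGen lo w b :=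
  sup'_le _ _ fun g hg => le_sup' lo (by simpa using (by simpa using hg : w g ≤ w a).trans hab)

lemma lowerGen_mem_range (f : α) : lowerGen lo w f ∈ range lo := by
  obtain ⟨g, -, hg⟩ := exists_mem_eq_sup' _ lo
  exact ⟨g, hg.symm⟩

lemma le_upperGen (hw : w ≤ hi) (e : α) : w e ≤ upperGen hi w e :=
  le_inf' _ _ fun g hg => (by simpa using hg : w e ≤ w g).trans (hw g)

lemma upperGen_le {e g : α} (heg : w e ≤ w g) : upperGen hi w e ≤ hi g :=
  inf'_le hi (by simpa using heg)

lemma upperGen_mem_range (e : α) : upperGen hi w e ∈ range hi := by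
  obtain ⟨g, -, hg⟩ := exists_mem_eq_inf' _ hi
  exact ⟨g, hg.symm⟩

lemma vertexGen_mono (e : α) {a b : α} (hab : w a ≤ w b) :
    vertexGen lo hi w e a ≤ vertexGen lo hi w e b := by
  unfold vertexGen
  split_ifs with ha hb hb
  · exact max_le_max (lowerGen_mono hab) le_rfl
  · exact absurd (ha.trans hab) hb
  · exact (lowerGen_mono hab).trans (le_max_left _ _)
  · exact lowerGen_mono hab

lemma vertexGen_mem_range (e f : α) : vertexGen lo hi w e f ∈ range lo ∪ range hi := by
  unfold vertexGen
  split_ifs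
  · rcases max_choice (lowerGen lo w f) (upperGen hi w e) with h | h <;> rw [h]
    exacts [.inl (lowerGen_mem_range f), .inr (upperGen_mem_range e)]
  · exact .inl (lowerGen_mem_range f)

variable (hw : w ∈ Icc lo hi)
include hw

lemma lowerGen_mem_Icc : lowerGen lo w ∈ Icc lo hi :=
  ⟨le_lowerGen, fun f => (lowerGen_le hw.1 f).trans (hw.2 f)⟩

lemma vertexGen_mem_Icc (e : α) : vertexGen lo hi w e ∈ Icc lo hi := by
  refine ⟨fun f => (le_lowerGen (w := w) f).trans ?_, fun f => ?_⟩
  · unfold vertexGen; split_ifs <;> simp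
  · have := (lowerGen_le hw.1 f).trans (hw.2 f)
    unfold vertexGen; split_ifs with hef
    exacts [max_le this (upperGen_le hef), this]

lemma vertexGen_self (e : α) : vertexGen lo hi w e e = upperGen hi w e := by
  simp [vertexGen, (lowerGen_le hw.1 e).trans (le_upperGen hw.2 e)]

lemma sub_upperGen_add_vertexGen_le (e f : α) :
    w e - upperGen hi w e + vertexGen lo hi w e f ≤ w f := by
  have := lowerGen_le hw.1 f
  have := le_upperGen hw.2 e
  unfold vertexGen; split_ifs with hef
  · rcases max_choice (lowerGen lo w f) (upperGen hi w e) with h | h <;> rw [h] <;> linarith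
  · linarith

end Generators

lemma tropConvex_closureUltrametric_inter_Icc (M : Matroid α) (lo hi : α → ℝ) :
    TropConvex ({w | ClosureUltrametric M w} ∩ Icc lo hi) := by
  rintro u ⟨hu, hulo, huhi⟩ v ⟨hv, -, hvhi⟩ c hc
  exact ⟨hu.sup (hv.const_add c), fun f => (hulo f).trans (le_max_left _ _),
    fun f => max_le (huhi f) (by linarith [hvhi f])⟩

theorem exists_closureUltrametric_inter_Icc_eq_tconv [Fintype α] [Nonempty α] (M : Matroid α)
    (lo hi : α → ℝ) (hne : ({w | ClosureUltrametric M w} ∩ Icc lo hi).Nonempty) :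
    ∃ (V : Finset (α → ℝ)) (hV : V.Nonempty),
      {w | ClosureUltrametric M w} ∩ Icc lo hi = tconv V hV := by
  classical
  set S := {w | ClosureUltrametric M w} ∩ Icc lo hi
  -- all generators take values in the finite set `range lo ∪ range hi`
  set V := (Fintype.piFinset fun _ => univ.image lo ∪ univ.image hi).filter (· ∈ S)
  have mem_V {v} (hvS : v ∈ S) (hv : ∀ f, v f ∈ range lo ∪ range hi) : v ∈ V := by
    simpa [V, hvS, Fintype.mem_piFinset] using hv
  have lowerGen_mem {w} (hw : w ∈ S) : lowerGen lo w ∈ V :=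
    mem_V ⟨hw.1.of_le_imp_le fun _ _ => lowerGen_mono, lowerGen_mem_Icc hw.2⟩
      fun f => .inl (lowerGen_mem_range f)
  have vertexGen_mem {w} (hw : w ∈ S) (e) : vertexGen lo hi w e ∈ V :=
    mem_V ⟨hw.1.of_le_imp_le fun _ _ => vertexGen_mono e, vertexGen_mem_Icc hw.2 e⟩
      (vertexGen_mem_range e)
  obtain ⟨w₀, hw₀⟩ := hne
  have hV : V.Nonempty := ⟨_, lowerGen_mem hw₀⟩
  refine ⟨V, hV, Subset.antisymm (fun w hw => ?_) <|
    (tropConvex_closureUltrametric_inter_Icc M lo hi).tconv_subset hV fun v hv =>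
      (Finset.mem_filter.1 hv).2⟩
  refine mem_tconv_of_forall_exists_le hV ⟨_, lowerGen_mem hw, lowerGen_le hw.2.1⟩ fun f =>
    ⟨_, vertexGen_mem hw f, w f - upperGen hi w f, sub_nonpos.2 (le_upperGen hw.2.2 f),
      sub_upperGen_add_vertexGen_le hw.2 f, by rw [vertexGen_self hw.2]; ring⟩

lemma linf_eq_dist [Fintype α] [Nonempty α] (x y : α → ℝ) : linf x y = dist x y := by
  have hle (e) : |x e - y e| ≤ linf x y := le_sup' (fun e => |x e - y e|) (mem_univ e)
  refine le_antisymm (sup'_le _ _ fun e _ => ?_) ?_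
  · simpa [Real.dist_eq] using dist_le_pi_dist x y e
  · exact (dist_pi_le_iff ((abs_nonneg _).trans (hle (Classical.arbitrary α)))).2 fun e => by
      simpa [Real.dist_eq] using hle e

lemma closedBall_eq_Icc_pi [Fintype α] [Nonempty α] (x : α → ℝ) (r : ℝ) :
    Metric.closedBall x r = Icc (fun e => x e - r) (fun e => x e + r) := by
  simp only [closedBall_pi', Real.closedBall_eq_Icc, pi_univ_Icc]

lemma cSet_eq_inter_closedBall [Fintype α] [Nonempty α] {M : Matroid α} {x w₀ : α → ℝ}
    (hw₀ : ClosureUltrametric M w₀)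
    (hmin : ∀ u, ClosureUltrametric M u → dist x w₀ ≤ dist x u) :
    CSet M x = {w | ClosureUltrametric M w} ∩ Metric.closedBall x (dist x w₀) := by
  ext w
  simp only [CSet, mem_ofPred_eq, mem_inter_iff, Metric.mem_closedBall, linf_eq_dist,
    mUltrametric_iff_closureUltrametric, dist_comm w]
  exact ⟨fun ⟨hw, hwmin⟩ => ⟨hw, hwmin w₀ hw₀⟩,
    fun ⟨hw, hd⟩ => ⟨hw, fun u hu => hd.trans (hmin u hu)⟩⟩

theorem stmt10_general [Fintype α] [Nonempty α] (M : Matroid α)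
    (hloop : ∀ e, M.Indep {e}) (x : α → ℝ) :
    (CSet M x).Nonempty ∧
      ∃ (V : Finset (α → ℝ)) (hV : V.Nonempty), CSet M x = tconv V hV := by
  obtain ⟨w₀, hw₀, hd⟩ := (isClosed_setOf_closureUltrametric M).exists_infDist_eq_dist
    ⟨_, ClosureUltrametric.const hloop 0⟩ x
  have hC := cSet_eq_inter_closedBall hw₀ fun u hu => hd ▸ Metric.infDist_le_dist_of_mem hu
  have hw₀C : w₀ ∈ CSet M x := hC ▸ ⟨hw₀, by rw [Metric.mem_closedBall, dist_comm]⟩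
  rw [hC, closedBall_eq_Icc_pi] at hw₀C ⊢
  exact ⟨⟨w₀, hw₀C⟩, exists_closureUltrametric_inter_Icc_eq_tconv M _ _ ⟨w₀, hw₀C⟩⟩

/-- For a loopless matroid on a finite nonempty ground set and `x ∈ ℝ^E`, the set
`C(x)` of `M`-ultrametrics `l∞`-nearest to `x` is nonempty and is the tropical convex
hull of a nonempty finite set; in particular it is a tropical polytope. -/
theorem stmt10 [Fintype α] [Nonempty α] (M : Matroid α) (hE : M.E = Set.univ)
    (hloop : ∀ e, M.Indep {e}) (x : α → ℝ) :
    (CSet M x).Nonempty ∧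
      ∃ (V : Finset (α → ℝ)) (hV : V.Nonempty), CSet M x = tconv V hV :=
  stmt10_general M hloop x
end

section
/- Let M be a loopless matroid on a finite nonempty ground set E and let x ∈ ℝ^E. Suppose x^M ∈ ℝ^E is an M-ultrametric with x^M(e) ≤ x(e) for all e ∈ E, such that every M-ultrametric w with w(e) ≤ x(e) for all e satisfies w(e) ≤ x^M(e) for all e (x^M is the subdominant M-ultrametric of x). Put δ = (1/2)·max_{e∈E}(x(e) − x^M(e)). Then: (1) every M-ultrametric w satisfies ‖x − w‖∞ ≥ δ, so the l∞-distance from x to the Bergman fan of M equals δ; and (2) the vector x^M + δ·1, obtained from x^M by adding δ to every coordinate, is an M-ultrametric with ‖x − (x^M + δ·1)‖∞ = δ, hence is an M-ultrametric l∞-nearest to x. -/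
variable {α : Type*}

/-- `δ = (1/2)·max_e (x e - xM e)`, where `xM` is the subdominant `M`-ultrametric. -/
noncomputable def subDelta [Fintype α] [Nonempty α] (x xM : α → ℝ) : ℝ :=
  (Finset.univ.sup' Finset.univ_nonempty fun e => x e - xM e) / 2

lemma bweight_add_const (w : α → ℝ) (c : ℝ) {B : Set α} (hB : B.Finite) :
    bweight (fun e => w e + c) B = bweight w B + B.ncard * c := by
  rw [bweight, bweight, ← hB.coe_toFinset, finsum_mem_coe_finset, finsum_mem_coe_finset,
    Finset.sum_add_distrib, Finset.sum_const, nsmul_eq_mul, Set.ncard_coe_finset]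

/-- All bases have the same cardinality, so a constant shift moves every basis weight equally. -/
lemma MUltrametric.add_const {M : Matroid α} [M.RankFinite] {w : α → ℝ} (hw : MUltrametric M w)
    (c : ℝ) : MUltrametric M (fun e => w e + c) := by
  intro e he
  obtain ⟨B, ⟨hB, hmin⟩, heB⟩ := hw e he
  refine ⟨B, ⟨hB, fun B' hB' => ?_⟩, heB⟩
  rw [bweight_add_const w c hB.finite, bweight_add_const w c hB'.finite,
    hB.ncard_eq_ncard_of_isBase hB']
  exact add_le_add_left (hmin B' hB') _

section Linf

variable [Fintype α] [Nonempty α]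

lemma abs_sub_le_linf (x y : α → ℝ) (e : α) : |x e - y e| ≤ linf x y :=
  Finset.le_sup' (fun e => |x e - y e|) (Finset.mem_univ e)

lemma sub_le_two_mul_subDelta (x xM : α → ℝ) (e : α) : x e - xM e ≤ 2 * subDelta x xM := by
  have := Finset.le_sup' (fun e => x e - xM e) (Finset.mem_univ e)
  simp only [subDelta]
  linarith

lemma exists_sub_eq_two_mul_subDelta (x xM : α → ℝ) : ∃ e, x e - xM e = 2 * subDelta x xM := by
  obtain ⟨e, -, he⟩ := Finset.exists_mem_eq_sup' Finset.univ_nonempty fun e => x e - xM e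
  exact ⟨e, by simp only [subDelta, he]; ring⟩

/-- The `l∞` lower bound: if `d = ‖x - w‖∞`, then `w - d·1 ≤ x` is again an `M`-ultrametric, hence
lies below `xM`, and at a coordinate where `x - xM` is maximal this forces `2d ≥ x e - xM e`. -/
lemma subDelta_le_linf {M : Matroid α} {x xM w : α → ℝ}
    (hsub : ∀ w : α → ℝ, MUltrametric M w → (∀ e, w e ≤ x e) → ∀ e, w e ≤ xM e)
    (hw : MUltrametric M w) : subDelta x xM ≤ linf x w := by
  have hclose (e : α) := abs_le.mp (abs_sub_le_linf x w e)
  have hbelow : ∀ e, w e + -linf x w ≤ xM e :=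
    hsub _ (hw.add_const _) fun e => by linarith [(hclose e).1]
  obtain ⟨e, he⟩ := exists_sub_eq_two_mul_subDelta x xM
  linarith [(hclose e).2, hbelow e]

lemma linf_add_subDelta {x xM : α → ℝ} (hxMle : ∀ e, xM e ≤ x e) :
    linf x (fun e => xM e + subDelta x xM) = subDelta x xM := by
  obtain ⟨e₀, he₀⟩ := exists_sub_eq_two_mul_subDelta x xM
  refine le_antisymm (Finset.sup'_le _ _ fun e _ => abs_le.mpr ⟨?_, ?_⟩) ?_
  · linarith [hxMle e, sub_le_two_mul_subDelta x xM e]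
  · linarith [hxMle e, sub_le_two_mul_subDelta x xM e]
  · calc subDelta x xM = |x e₀ - (xM e₀ + subDelta x xM)| := by
          rw [abs_of_nonneg] <;> linarith [hxMle e₀]
      _ ≤ _ := abs_sub_le_linf x (fun e => xM e + subDelta x xM) e₀

end Linf

theorem stmt12_general [Fintype α] [Nonempty α] (M : Matroid α) (x xM : α → ℝ)
    (hxMu : MUltrametric M xM) (hxMle : ∀ e, xM e ≤ x e)
    (hsub : ∀ w : α → ℝ, MUltrametric M w → (∀ e, w e ≤ x e) → ∀ e, w e ≤ xM e) :
    (∀ w : α → ℝ, MUltrametric M w → subDelta x xM ≤ linf x w) ∧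
      MUltrametric M (fun e => xM e + subDelta x xM) ∧
      linf x (fun e => xM e + subDelta x xM) = subDelta x xM :=
  ⟨fun _ hw => subDelta_le_linf hsub hw, hxMu.add_const _, linf_add_subDelta hxMle⟩

/-- If `xM` is the subdominant `M`-ultrametric of `x` and `δ = (1/2)max_e(x e - xM e)`,
then every `M`-ultrametric is at `l∞`-distance at least `δ` from `x`, and `xM + δ·1`
is an `M`-ultrametric at distance exactly `δ`; so the distance from `x` to the Bergman
fan is `δ` and `xM + δ·1` is `l∞`-nearest to `x`. -/
theorem stmt12 [Fintype α] [Nonempty α] (M : Matroid α) (hE : M.E = Set.univ)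
    (hloop : ∀ e, M.Indep {e}) (x xM : α → ℝ)
    (hxMu : MUltrametric M xM) (hxMle : ∀ e, xM e ≤ x e)
    (hsub : ∀ w : α → ℝ, MUltrametric M w → (∀ e, w e ≤ x e) → ∀ e, w e ≤ xM e) :
    (∀ w : α → ℝ, MUltrametric M w → subDelta x xM ≤ linf x w) ∧
      MUltrametric M (fun e => xM e + subDelta x xM) ∧
      linf x (fun e => xM e + subDelta x xM) = subDelta x xM :=
  stmt12_general M x xM hxMu hxMle hsub
end

section
/- Let M be a loopless matroid on a finite nonempty ground set E and let x ∈ ℝ^E. If v is a tropical vertex of C(x), then at most one flat of M is mobile for v across all resolutions of T(v): for any resolutions S₁ and S₂ of T(v), any compatible α₁ with v = w^{S₁,α₁} and α₂ with v = w^{S₂,α₂}, and any mobile members F₁ ∈ S₁ and F₂ ∈ S₂, one has F₁ = F₂. -/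
variable {α : Type*}

/-- A circuit of `M`: a dependent subset of the ground set all of whose proper
subsets are independent. -/
def MCircuit (M : Matroid α) (C : Set α) : Prop :=
  C ⊆ M.E ∧ ¬ M.Indep C ∧ ∀ D : Set α, D ⊂ C → M.Indep D

/-- A matroid is connected if its ground set is nonempty and any two distinct
elements of the ground set lie in a common circuit. -/
def MConnected (M : Matroid α) : Prop :=
  M.E.Nonempty ∧ ∀ a ∈ M.E, ∀ b ∈ M.E, a ≠ b → ∃ C, MCircuit M C ∧ a ∈ C ∧ b ∈ C

/-- The connected component of `e` in `M`: the equivalence class of `e` under the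
relation "lying in a common circuit". -/
def MComponent (M : Matroid α) (e : α) : Set α :=
  {f ∈ M.E | f = e ∨ ∃ C, MCircuit M C ∧ e ∈ C ∧ f ∈ C}

/-- A nested set of `M`: a collection of nonempty connected flats containing every
connected component of `M`, such that the closure of the union of any ≥ 2 pairwise
incomparable members induces a disconnected restriction. -/
def NestedSet (M : Matroid α) (S : Set (Set α)) : Prop :=
  (∀ F ∈ S, F.Nonempty ∧ M.IsFlat F ∧ MConnected (M.restrict F)) ∧
  (∀ e ∈ M.E, MComponent M e ∈ S) ∧
  (∀ T : Finset (Set α), ↑T ⊆ S → 2 ≤ T.card →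
    (∀ F ∈ T, ∀ G ∈ T, F ≠ G → ¬ F ⊆ G ∧ ¬ G ⊆ F) →
    ¬ MConnected (M.restrict (M.closure (⋃ F ∈ T, F))))

/-- `a : S → ℝ` is compatible with `S`: weakly monotone with respect to inclusion. -/
def Compat (S : Set (Set α)) (a : Set α → ℝ) : Prop :=
  ∀ F ∈ S, ∀ G ∈ S, F ⊆ G → a F ≤ a G

/-- `a : S → ℝ` is strictly compatible with `S`. -/
def StrictCompat (S : Set (Set α)) (a : Set α → ℝ) : Prop :=
  ∀ F ∈ S, ∀ G ∈ S, F ⊂ G → a F < a G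

/-- `F` is the minimal member of `S` containing `e`. -/
def MinMem (S : Set (Set α)) (e : α) (F : Set α) : Prop :=
  F ∈ S ∧ e ∈ F ∧ ∀ G ∈ S, e ∈ G → F ⊆ G

/-- `w` is the vector `w^{S,a}`, i.e. `w e = a (F_e)` where `F_e` is the minimal
member of `S` containing `e`, for every `e` in the ground set. -/
def Represents (M : Matroid α) (S : Set (Set α)) (a : Set α → ℝ) (w : α → ℝ) : Prop :=
  ∀ e ∈ M.E, ∃ F, MinMem S e F ∧ w e = a F

/-- `S` is the topology `T(w)` of the `M`-ultrametric `w`: the unique nested set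
admitting a strictly compatible weighting representing `w`. -/
def IsTopologyOf (M : Matroid α) (w : α → ℝ) (S : Set (Set α)) : Prop :=
  NestedSet M S ∧ ∃ a, StrictCompat S a ∧ Represents M S a w

/-- The rank of a set in a matroid: the largest cardinality of an independent subset. -/
noncomputable def mrank (M : Matroid α) (X : Set α) : ℕ :=
  sSup {n | ∃ I, I ⊆ X ∧ M.Indep I ∧ I.ncard = n}

/-- A polytomy of a nested set `S`: a member `F` with
`r(F) - r(⋃{G ∈ S : G ⊊ F}) ≥ 2`. -/
def Polytomy (M : Matroid α) (S : Set (Set α)) (F : Set α) : Prop :=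
  F ∈ S ∧ mrank M (⋃₀ {G | G ∈ S ∧ G ⊂ F}) + 2 ≤ mrank M F

/-- A resolution of a nested set `S`: a nested set containing `S` with no polytomies. -/
def MResolution (M : Matroid α) (S S' : Set (Set α)) : Prop :=
  NestedSet M S' ∧ S ⊆ S' ∧ ∀ F ∈ S', ¬ Polytomy M S' F

open scoped Classical in
/-- The weighting obtained from `a` by changing its value at `F` to `t`. -/
noncomputable def updF (a : Set α → ℝ) (F : Set α) (t : ℝ) : Set α → ℝ :=
  fun G => if G = F then t else a G

/-- `F ∈ S` is mobile for `w = w^{S,a} ∈ C(x)`: its weight can be strictly decreased,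
keeping compatibility, so that the resulting vector is still in `C(x)`. -/
def Mobile [Fintype α] [Nonempty α] (M : Matroid α) (x : α → ℝ) (S : Set (Set α))
    (a : Set α → ℝ) (w : α → ℝ) (F : Set α) : Prop :=
  F ∈ S ∧ ∃ t < a F, Compat S (updF a F t) ∧
    ∃ w', Represents M S (updF a F t) w' ∧ w' ≠ w ∧ w' ∈ CSet M x

/-- `w'` is obtained from `w = w^{S,a}` by sliding the mobile flat `F` all the way
down: the new weight `t` of `F` is either the maximum weight of the members of `S`
properly contained in `F`, or the least value keeping the result in `C(x)`. -/
def SlideTo [Fintype α] [Nonempty α] (M : Matroid α) (x : α → ℝ) (S : Set (Set α))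
    (a : Set α → ℝ) (w : α → ℝ) (F : Set α) (w' : α → ℝ) : Prop :=
  F ∈ S ∧ ∃ t < a F, Compat S (updF a F t) ∧ Represents M S (updF a F t) w' ∧
    w' ≠ w ∧ w' ∈ CSet M x ∧
    (IsGreatest {r | ∃ G, G ∈ S ∧ G ⊂ F ∧ r = a G} t ∨
      IsLeast {s | Compat S (updF a F s) ∧
        ∃ w'', Represents M S (updF a F s) w'' ∧ w'' ∈ CSet M x} t)

/-- `w'` is obtained from `w` by sliding some mobile member of some resolution of
`T(w)` all the way down. -/
def SlideStep [Fintype α] [Nonempty α] (M : Matroid α) (x : α → ℝ) (w w' : α → ℝ) :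
    Prop :=
  ∃ (T S : Set (Set α)) (a : Set α → ℝ) (F : Set α),
    IsTopologyOf M w T ∧ MResolution M T S ∧ Compat S a ∧
    Represents M S a w ∧ SlideTo M x S a w F w'

/-- The sequence `S₀ = {x^m}`, `S_{i+1} = ` vectors obtained from members of `S_i`
by sliding a mobile flat all the way down. -/
def Sseq [Fintype α] [Nonempty α] (M : Matroid α) (x xm : α → ℝ) : ℕ → Set (α → ℝ)
  | 0 => {xm}
  | i + 1 => {w' | ∃ w ∈ Sseq M x xm i, SlideStep M x w w'}

/-- `v` is a tropical vertex of `C(x)`. -/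
def TropVertex [Fintype α] [Nonempty α] (M : Matroid α) (x v : α → ℝ) : Prop :=
  v ∈ CSet M x ∧ ∀ u ∈ CSet M x, ∀ w ∈ CSet M x, ∀ lam mu : ℝ, max lam mu = 0 →
    (∀ e, v e = max (lam + u e) (mu + w e)) → v = u ∨ v = w


/-!
Lowering a mobile member only lowers `v` on the elements it is the minimal member for. If the
mobile members `F₁ ∈ S₁` and `F₂ ∈ S₂` had no such element `e` in common, `v` would be the
tropical maximum of the two lowered vectors, contradicting that `v` is a vertex.

Let `G` be the minimal member of `T(v)` containing `e`. Since `F₁` is no polytomy, it is spanned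
by `e` and the members of `S₁` below it; these carry values smaller than `v e`, so they lie in
members of `T(v)` strictly below `G`. In a nested set, every connected component of the closure
of a union of members is itself a member. Apply this in `S₂` to the union of `F₂` and the
members of `T(v)` below `G`: the component of `e` in its closure contains the connected flat `F₁`,
and it can only be `F₂`, as `e` lies in no member of `T(v)` below `G`. So `F₁ ⊆ F₂`, and
symmetrically `F₂ ⊆ F₁`.
-/

open Set

namespace Matroid

variable {M : Matroid α} {C C₁ C₂ F L U X : Set α} {a b c e y z : α}

/-- Two eliminations: the first removes a common element of `C₁` and `C₂` while keeping `a`,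
the second removes from `C₂` an element of `C₂ \ C₁` while keeping `c`; the resulting circuit
still meets `C₁` but has fewer elements outside `C₁` than `C₂`. -/
theorem IsCircuit.exists_isCircuit_of_inter_nonempty [M.Finitary] (hC₁ : M.IsCircuit C₁)
    (hC₂ : M.IsCircuit C₂) (hC₁₂ : (C₁ ∩ C₂).Nonempty) (ha : a ∈ C₁) (hc : c ∈ C₂) :
    ∃ C ⊆ C₁ ∪ C₂, M.IsCircuit C ∧ a ∈ C ∧ c ∈ C := by
  induction hn : (C₂ \ C₁).ncard using Nat.strong_induction_on generalizing C₂ with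
  | _ n ih =>
  by_cases hc₁ : c ∈ C₁
  · exact ⟨C₁, subset_union_left, hC₁, ha, hc₁⟩
  by_cases ha₂ : a ∈ C₂
  · exact ⟨C₂, subset_union_right, hC₂, ha₂, hc⟩
  obtain ⟨f, hf₁, hf₂⟩ := hC₁₂
  obtain ⟨C₃, hC₃ss, hC₃, haC₃⟩ := hC₁.strong_elimination hC₂ hf₁ hf₂ ha ha₂
  by_cases hcC₃ : c ∈ C₃
  · exact ⟨C₃, hC₃ss.trans sdiff_subset, hC₃, haC₃, hcC₃⟩
  obtain ⟨g, hgC₃, hgC₁⟩ : ∃ g ∈ C₃, g ∉ C₁ := not_subset.1 fun h =>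
    (hC₃ss (hC₃.eq_of_subset_isCircuit hC₁ h ▸ hf₁)).2 rfl
  have hgC₂ : g ∈ C₂ := (hC₃ss hgC₃).1.resolve_left hgC₁
  obtain ⟨C₄, hC₄ss, hC₄, hcC₄⟩ := hC₂.strong_elimination hC₃ hgC₂ hgC₃ hc hcC₃
  have hC₄sub : C₄ ⊆ C₁ ∪ C₂ :=
    hC₄ss.trans <| sdiff_subset.trans <| union_subset subset_union_right <| hC₃ss.trans sdiff_subset
  have hC₁₄ : (C₁ ∩ C₄).Nonempty := by
    by_contra h
    have hC₄C₂ : C₄ ⊆ C₂ := fun y hy => (hC₄sub hy).resolve_left fun hy₁ => h ⟨y, hy₁, hy⟩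
    exact (hC₄ss (hC₄.eq_of_subset_isCircuit hC₂ hC₄C₂ ▸ hgC₂)).2 rfl
  have hlt : (C₄ \ C₁).ncard < n := by
    have hsub : C₄ \ C₁ ⊆ C₂ \ C₁ := fun y hy => ⟨(hC₄sub hy.1).resolve_left hy.2, hy.2⟩
    exact hn ▸ ncard_lt_ncard ((ssubset_iff_of_subset hsub).2
      ⟨g, ⟨hgC₂, hgC₁⟩, fun hg => (hC₄ss hg.1).2 rfl⟩) hC₂.finite.sdiff
  obtain ⟨C, hCss, hC, haC, hcC⟩ := ih _ hlt hC₄ hC₁₄ hcC₄ rfl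
  exact ⟨C, hCss.trans (union_subset subset_union_left hC₄sub), hC, haC, hcC⟩

def Linked (M : Matroid α) (L : Set α) (a b : α) : Prop :=
  a = b ∨ ∃ C ⊆ L, M.IsCircuit C ∧ a ∈ C ∧ b ∈ C

lemma IsCircuit.linked (hC : M.IsCircuit C) (hCL : C ⊆ L) (ha : a ∈ C) (hb : b ∈ C) :
    M.Linked L a b :=
  Or.inr ⟨C, hCL, hC, ha, hb⟩

namespace Linked

lemma refl (M : Matroid α) (L : Set α) (a : α) : M.Linked L a a := Or.inl rfl

lemma symm (h : M.Linked L a b) : M.Linked L b a := by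
  obtain rfl | ⟨C, hCL, hC, ha, hb⟩ := h
  · exact refl M L a
  · exact hC.linked hCL hb ha

lemma trans [M.Finitary] (hab : M.Linked L a b) (hbc : M.Linked L b c) : M.Linked L a c := by
  obtain rfl | ⟨C₁, hC₁L, hC₁, ha, hb₁⟩ := hab
  · exact hbc
  obtain rfl | ⟨C₂, hC₂L, hC₂, hb₂, hc⟩ := hbc
  · exact hC₁.linked hC₁L ha hb₁
  obtain ⟨C, hCs, hC, haC, hcC⟩ := hC₁.exists_isCircuit_of_inter_nonempty hC₂ ⟨b, hb₁, hb₂⟩ ha hc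
  exact hC.linked (hCs.trans (union_subset hC₁L hC₂L)) haC hcC

lemma mono (h : M.Linked L a b) (hLU : L ⊆ U) : M.Linked U a b :=
  h.imp_right fun ⟨C, hCL, hC⟩ => ⟨C, hCL.trans hLU, hC⟩

end Linked

/-- The class of `z` under `M.Linked L`; for `z ∈ L` this is the connected component of `z`
in `M ↾ L`. -/
def linkClass (M : Matroid α) (L : Set α) (z : α) : Set α := {y | M.Linked L z y}

lemma mem_linkClass_self (M : Matroid α) (L : Set α) (z : α) : z ∈ M.linkClass L z :=
  Linked.refl M L z

lemma linkClass_subset (hz : z ∈ L) : M.linkClass L z ⊆ L := by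
  rintro y (rfl | ⟨C, hCL, -, -, hy⟩)
  exacts [hz, hCL hy]

lemma subset_linkClass [M.Finitary] (hX : ∀ a ∈ X, ∀ b ∈ X, M.Linked L a b) (hyX : y ∈ X)
    (hy : y ∈ M.linkClass L z) : X ⊆ M.linkClass L z :=
  fun _ hb => Linked.trans hy (hX y hyX _ hb)

lemma IsCircuit.subset_linkClass [M.Finitary] (hC : M.IsCircuit C) (hCL : C ⊆ L) (hyC : y ∈ C)
    (hy : y ∈ M.linkClass L z) : C ⊆ M.linkClass L z :=
  Matroid.subset_linkClass (fun _ ha _ hb => hC.linked hCL ha hb) hyC hy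

lemma closure_inter_linkClass [M.Finitary] [M.Loopless] (hz : z ∈ M.closure U) :
    M.closure (U ∩ M.linkClass (M.closure U) z) = M.linkClass (M.closure U) z := by
  set K := M.linkClass (M.closure U) z
  have hKL : K ⊆ M.closure U := linkClass_subset hz
  refine subset_antisymm (fun y hy => ?_) (fun y hyK => ?_)
  · by_cases hyUK : y ∈ U ∩ K
    · exact hyUK.2
    obtain ⟨C, hCss, hC, hyC⟩ := exists_isCircuit_of_mem_closure hy hyUK
    obtain ⟨x, hxC, hxy⟩ := (loopless_iff_forall_isCircuit.1 ‹_› C hC).exists_ne y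
    have hxUK : x ∈ U ∩ K := (hCss hxC).resolve_left hxy
    have hCL : C ⊆ M.closure U := hCss.trans <| insert_subset
      (M.closure_subset_closure inter_subset_left hy) (inter_subset_right.trans hKL)
    exact hC.subset_linkClass hCL hxC hxUK.2 hyC
  · by_cases hyU : y ∈ U
    · exact M.mem_closure_of_mem' ⟨hyU, hyK⟩ (M.closure_subset_ground U (hKL hyK))
    obtain ⟨C, hCss, hC, hyC⟩ := exists_isCircuit_of_mem_closure (hKL hyK) hyU
    have hCL : C ⊆ M.closure U := fun c hc => (hCss hc).elim (· ▸ hKL hyK)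
      fun hcU => M.mem_closure_of_mem' hcU (hC.subset_ground hc)
    have hCK : C ⊆ K := hC.subset_linkClass hCL hyC hyK
    have hCU : C \ {y} ⊆ U ∩ K := fun c hc => ⟨(hCss hc.1).resolve_left hc.2, hCK hc.1⟩
    exact M.closure_subset_closure hCU (hC.mem_closure_sdiff_singleton_of_mem hyC)

lemma IsFlat.eq_closure_insert [M.RankFinite] (hF : M.IsFlat F) (hXF : X ⊆ F) (heF : e ∈ F)
    (he : e ∉ M.closure X) (hr : M.eRk F ≤ M.eRk X + 1) : F = M.closure (insert e X) := by
  have hins : M.eRk (insert e X) = M.eRk X + 1 := eRk_insert_eq_add_one ⟨hF.subset_ground heF, he⟩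
  rw [(M.isRkFinite_set _).closure_eq_closure_of_subset_of_eRk_ge_eRk (insert_subset heF hXF)
    (hins ▸ hr), hF.closure]

end Matroid

section NestedSets

open Matroid

variable {M : Matroid α} {S T 𝒜 𝒟 : Set (Set α)} {C F L : Set α} {z : α}

lemma mcircuit_iff : MCircuit M C ↔ M.IsCircuit C := by
  rw [isCircuit_iff_forall_ssubset, dep_iff, MCircuit]
  tauto

lemma mconnected_restrict_iff (hL : L ⊆ M.E) :
    MConnected (M ↾ L) ↔ L.Nonempty ∧ ∀ a ∈ L, ∀ b ∈ L, M.Linked L a b := by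
  simp only [MConnected, restrict_ground_eq, mcircuit_iff, restrict_isCircuit_iff hL, Linked,
    or_iff_not_imp_left]
  refine and_congr_right fun _ => forall₄_congr fun a _ b _ => imp_congr_right fun _ => ?_
  exact exists_congr fun C => by tauto

lemma mconnected_restrict_linkClass [M.Finitary] (hz : z ∈ L) (hL : L ⊆ M.E) :
    MConnected (M ↾ M.linkClass L z) := by
  have hKL : M.linkClass L z ⊆ L := linkClass_subset hz
  refine (mconnected_restrict_iff (hKL.trans hL)).2 ⟨⟨z, mem_linkClass_self M L z⟩,
    fun a ha b hb => ?_⟩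
  obtain rfl | ⟨C, hCL, hC, haC, hbC⟩ := Linked.trans (Linked.symm ha) hb
  · exact Linked.refl M _ a
  · exact hC.linked (hC.subset_linkClass hCL haC ha) haC hbC

lemma mrank_eq_eRk [M.RankFinite] (X : Set α) : (mrank M X : ℕ∞) = M.eRk X := by
  obtain ⟨I, hI⟩ := M.exists_isBasis' X
  have hIfin : I.Finite := hI.indep.finite
  have hmax : IsGreatest {n | ∃ J, J ⊆ X ∧ M.Indep J ∧ J.ncard = n} I.ncard := by
    refine ⟨⟨I, hI.subset, hI.indep, rfl⟩, ?_⟩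
    rintro _ ⟨J, hJX, hJ, rfl⟩
    have h := hJ.encard_le_eRk_of_subset hJX
    rw [← hI.encard_eq_eRk, ← hIfin.cast_ncard_eq, ← hJ.finite.cast_ncard_eq] at h
    exact_mod_cast h
  rw [mrank, hmax.csSup_eq, hIfin.cast_ncard_eq, hI.encard_eq_eRk]

lemma MResolution.eRk_le [M.RankFinite] (hS : MResolution M T S) (hF : F ∈ S) :
    M.eRk F ≤ M.eRk (⋃₀ {G | G ∈ S ∧ G ⊂ F}) + 1 := by
  have h := hS.2.2 F hF
  simp only [Polytomy, not_and, not_le] at h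
  have h' := h hF
  rw [← mrank_eq_eRk, ← mrank_eq_eRk]
  exact_mod_cast (by omega : mrank M F ≤ mrank M (⋃₀ {G | G ∈ S ∧ G ⊂ F}) + 1)

namespace NestedSet

lemma isFlat (hS : NestedSet M S) (hF : F ∈ S) : M.IsFlat F := (hS.1 F hF).2.1

lemma linked (hS : NestedSet M S) (hF : F ∈ S) {a b : α} (ha : a ∈ F) (hb : b ∈ F) :
    M.Linked F a b :=
  ((mconnected_restrict_iff (hS.isFlat hF).subset_ground).1 (hS.1 F hF).2.2).2 a ha b hb

lemma sUnion_subset_ground (hS : NestedSet M S) (h𝒟S : 𝒟 ⊆ S) : ⋃₀ 𝒟 ⊆ M.E :=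
  sUnion_subset fun _ hD => (hS.isFlat (h𝒟S hD)).subset_ground

lemma subsingleton_of_isAntichain (hS : NestedSet M S) (h𝒜S : 𝒜 ⊆ S) (h𝒜 : 𝒜.Finite)
    (hanti : IsAntichain (· ⊆ ·) 𝒜) (hconn : MConnected (M ↾ M.closure (⋃₀ 𝒜))) :
    𝒜.Subsingleton := by
  by_contra hnt
  refine hS.2.2 h𝒜.toFinset (by simpa using h𝒜S) ?_ ?_ ?_
  · rw [← ncard_eq_toFinset_card 𝒜 h𝒜]
    exact one_lt_ncard_iff_nontrivial_and_finite.2 ⟨not_subsingleton_iff.1 hnt, h𝒜⟩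
  · simp only [Finite.mem_toFinset]
    exact fun F hF G hG hne => ⟨hanti hF hG hne, hanti hG hF hne.symm⟩
  · simpa [sUnion_eq_biUnion] using hconn

/-- The members of `𝒟` meeting the component `K` of `z` lie in `K` and span it; their maximal
ones form an antichain whose span `K` is connected, so there is only one of them. -/
theorem linkClass_mem [M.Finitary] [M.Loopless] (hS : NestedSet M S) (h𝒟S : 𝒟 ⊆ S)
    (h𝒟 : 𝒟.Finite) (hz : z ∈ M.closure (⋃₀ 𝒟)) :
    M.linkClass (M.closure (⋃₀ 𝒟)) z ∈ 𝒟 := by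
  set L := M.closure (⋃₀ 𝒟)
  set K := M.linkClass L z
  set 𝒟K := {D ∈ 𝒟 | D ⊆ K}
  have hUK : ⋃₀ 𝒟 ∩ K = ⋃₀ 𝒟K := by
    refine subset_antisymm ?_ fun y ⟨D, ⟨hD, hDK⟩, hyD⟩ => ⟨⟨D, hD, hyD⟩, hDK hyD⟩
    rintro y ⟨⟨D, hD, hyD⟩, hyK⟩
    have hDL : D ⊆ L := (subset_sUnion_of_mem hD).trans
      (M.subset_closure _ (hS.sUnion_subset_ground h𝒟S))
    exact ⟨D, ⟨hD, subset_linkClass (fun a ha b hb => (hS.linked (h𝒟S hD) ha hb).mono hDL)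
      hyD hyK⟩, hyD⟩
  have hK : M.closure (⋃₀ 𝒟K) = K := hUK ▸ closure_inter_linkClass hz
  set 𝒜 := {D | Maximal (· ∈ 𝒟K) D}
  have h𝒜K : ⋃₀ 𝒜 = ⋃₀ 𝒟K := by
    refine subset_antisymm (sUnion_mono fun D hD => hD.prop) (sUnion_subset fun D hD => ?_)
    obtain ⟨A, hDA, hA⟩ := (h𝒟.subset (sep_subset _ _)).exists_le_maximal hD
    exact hDA.trans (subset_sUnion_of_mem hA)
  have h𝒜 : 𝒜.Subsingleton := by
    refine hS.subsingleton_of_isAntichain (fun D hD => h𝒟S hD.prop.1)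
      (h𝒟.subset fun D hD => hD.prop.1) (setOfPred_maximal_antichain _) ?_
    rw [h𝒜K, hK]
    exact mconnected_restrict_linkClass hz (M.closure_subset_ground _)
  obtain h𝒜e | ⟨A, h𝒜A⟩ := h𝒜.eq_empty_or_singleton
  · have hzK : z ∈ K := mem_linkClass_self M L z
    rw [← hK, ← h𝒜K, h𝒜e, sUnion_empty, Matroid.closure_empty, loops_eq_empty] at hzK
    exact hzK.elim
  have hA : A ∈ 𝒟K := (h𝒜A ▸ mem_singleton A : A ∈ 𝒜).prop
  rw [← hK, ← h𝒜K, h𝒜A, sUnion_singleton, (hS.isFlat (h𝒟S hA.1)).closure]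
  exact hA.1

lemma closure_sUnion [M.Finitary] [M.Loopless] (hS : NestedSet M S) (h𝒟S : 𝒟 ⊆ S)
    (h𝒟 : 𝒟.Finite) : M.closure (⋃₀ 𝒟) = ⋃₀ 𝒟 :=
  subset_antisymm (fun z hz => ⟨_, hS.linkClass_mem h𝒟S h𝒟 hz, mem_linkClass_self M _ z⟩)
    (M.subset_closure _ (hS.sUnion_subset_ground h𝒟S))

end NestedSet

end NestedSets

section Mobility

open Matroid

variable {M : Matroid α} {S S' T : Set (Set α)} {a aT : Set α → ℝ} {v : α → ℝ} {e f : α}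
  {F F' G K : Set α}

lemma MinMem.eq (h : MinMem S e F) (h' : MinMem S e G) : F = G :=
  subset_antisymm (h.2.2 G h'.1 h'.2.1) (h'.2.2 F h.1 h.2.1)

lemma Represents.apply_eq (hr : Represents M S a v) (he : e ∈ M.E) (hF : MinMem S e F) :
    v e = a F := by
  obtain ⟨F', hF', hv⟩ := hr e he
  rwa [hF'.eq hF] at hv

lemma Represents.mem_sUnion_of_lt (hr : Represents M T aT v) (hG : MinMem T e G) (he : e ∈ M.E)
    (hf : f ∈ M.E) (hfG : f ∈ G) (hlt : v f < v e) : f ∈ ⋃₀ {K | K ∈ T ∧ K ⊂ G} := by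
  obtain ⟨Q, hQ, hvf⟩ := hr f hf
  have hQG : Q ⊆ G := hQ.2.2 G hG.1 hfG
  refine ⟨Q, ⟨hQ.1, hQG.ssubset_of_ne ?_⟩, hQ.2.1⟩
  rintro rfl
  exact hlt.ne (hvf.trans (hr.apply_eq he hG).symm)

section Tropical

variable [Fintype α] [Nonempty α] {x : α → ℝ}

lemma Mobile.lt_of_ssubset (hm : Mobile M x S a v F) (hK : K ∈ S) (hKF : K ⊂ F) : a K < a F := by
  obtain ⟨hF, t, ht, hc, -⟩ := hm
  have h := hc K hK F hF hKF.subset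
  simp only [updF, hKF.ne, if_false, if_true] at h
  exact h.trans_lt ht

lemma Mobile.exists_mem_cSet (hm : Mobile M x S a v F) (hr : Represents M S a v) :
    ∃ w ∈ CSet M x, w ≠ v ∧ ∀ f ∈ M.E, w f ≤ v f ∧ (w f ≠ v f → MinMem S f F) := by
  obtain ⟨-, t, ht, -, w, hw, hwv, hwC⟩ := hm
  refine ⟨w, hwC, hwv, fun f hf => ?_⟩
  obtain ⟨P, hP, hwf⟩ := hw f hf
  rw [hwf, hr.apply_eq hf hP]
  by_cases hPF : P = F
  · subst hPF
    simpa [updF] using ⟨ht.le, fun _ => hP⟩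
  · simp [updF, hPF]

lemma TropVertex.exists_ne_of_le {w₁ w₂ : α → ℝ} (hv : TropVertex M x v) (hw₁ : w₁ ∈ CSet M x)
    (hw₂ : w₂ ∈ CSet M x) (h₁ : w₁ ≠ v) (h₂ : w₂ ≠ v) (hle₁ : w₁ ≤ v) (hle₂ : w₂ ≤ v) :
    ∃ f, w₁ f ≠ v f ∧ w₂ f ≠ v f := by
  by_contra! h
  have hmax : ∀ f, v f = max (0 + w₁ f) (0 + w₂ f) := fun f => by
    rw [zero_add, zero_add]
    rcases eq_or_ne (w₁ f) (v f) with h1 | h1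
    · rw [h1, max_eq_left (hle₂ f)]
    · rw [h f h1, max_eq_right (hle₁ f)]
  obtain h | h := hv.2 w₁ hw₁ w₂ hw₂ 0 0 (max_self 0) hmax
  exacts [h₁ h.symm, h₂ h.symm]

lemma TropVertex.exists_minMem_of_mobile {S₁ S₂ : Set (Set α)} {a₁ a₂ : Set α → ℝ}
    {F₁ F₂ : Set α} (hE : M.E = univ) (hv : TropVertex M x v) (hr₁ : Represents M S₁ a₁ v)
    (hr₂ : Represents M S₂ a₂ v) (hm₁ : Mobile M x S₁ a₁ v F₁) (hm₂ : Mobile M x S₂ a₂ v F₂) :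
    ∃ e, MinMem S₁ e F₁ ∧ MinMem S₂ e F₂ := by
  have hE' : ∀ f, f ∈ M.E := fun f => hE ▸ mem_univ f
  obtain ⟨w₁, hw₁, hne₁, h₁⟩ := hm₁.exists_mem_cSet hr₁
  obtain ⟨w₂, hw₂, hne₂, h₂⟩ := hm₂.exists_mem_cSet hr₂
  obtain ⟨e, he₁, he₂⟩ := hv.exists_ne_of_le hw₁ hw₂ hne₁ hne₂ (fun f => (h₁ f (hE' f)).1)
    (fun f => (h₂ f (hE' f)).1)
  exact ⟨e, (h₁ e (hE' e)).2 he₁, (h₂ e (hE' e)).2 he₂⟩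

lemma Mobile.lt_of_mem_sUnion (hm : Mobile M x S a v F) (ha : Compat S a)
    (hr : Represents M S a v) (he : e ∈ M.E) (heF : MinMem S e F)
    (hf : f ∈ ⋃₀ {K | K ∈ S ∧ K ⊂ F}) (hfE : f ∈ M.E) : v f < v e := by
  obtain ⟨K, ⟨hK, hKF⟩, hfK⟩ := hf
  obtain ⟨P, hP, hvf⟩ := hr f hfE
  rw [hvf, hr.apply_eq he heF]
  exact (ha P hP.1 K hK (hP.2.2 K hK hfK)).trans_lt (hm.lt_of_ssubset hK hKF)

lemma Mobile.subset_closure_insert [M.Loopless] (hS : MResolution M T S) (ha : Compat S a)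
    (hr : Represents M S a v) (hm : Mobile M x S a v F) (heF : MinMem S e F)
    (hrT : Represents M T aT v) (hG : MinMem T e G) :
    F ⊆ M.closure (insert e (⋃₀ {K | K ∈ T ∧ K ⊂ G})) := by
  set U := ⋃₀ {K | K ∈ T ∧ K ⊂ G}
  set X := ⋃₀ {K | K ∈ S ∧ K ⊂ F}
  have hF : M.IsFlat F := hS.1.isFlat hm.1
  have heE : e ∈ M.E := hF.subset_ground heF.2.1
  have hFG : F ⊆ G := heF.2.2 G (hS.2.1 hG.1) hG.2.1
  have hXF : X ⊆ F := sUnion_subset fun K hK => hK.2.subset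
  have hXU : X ⊆ U := fun f hf =>
    have hfE := hF.subset_ground (hXF hf)
    hrT.mem_sUnion_of_lt hG heE hfE (hFG (hXF hf)) (hm.lt_of_mem_sUnion ha hr heE heF hf hfE)
  have hU : M.closure U = U := hS.1.closure_sUnion (fun K hK => hS.2.1 hK.1) (toFinite _)
  have heU : e ∉ U := fun ⟨K, ⟨hK, hKG⟩, heK⟩ => hKG.not_subset (hG.2.2 K hK heK)
  have heX : e ∉ M.closure X := fun h => heU (hU ▸ M.closure_subset_closure hXU h)
  calc F = M.closure (insert e X) := hF.eq_closure_insert hXF heF.2.1 heX (hS.eRk_le hm.1)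
    _ ⊆ M.closure (insert e U) := M.closure_subset_closure (insert_subset_insert hXU)

lemma Mobile.subset_of_minMem [M.Loopless] (hS : MResolution M T S) (ha : Compat S a)
    (hr : Represents M S a v) (hm : Mobile M x S a v F) (heF : MinMem S e F)
    (hrT : Represents M T aT v) (hG : MinMem T e G) (hS' : NestedSet M S') (hTS' : T ⊆ S')
    (hF' : F' ∈ S') (heF' : e ∈ F') : F ⊆ F' := by
  set 𝒟 := insert F' {K | K ∈ T ∧ K ⊂ G}
  set L := M.closure (⋃₀ 𝒟)
  have hFL : F ⊆ L := (hm.subset_closure_insert hS ha hr heF hrT hG).trans <|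
    M.closure_subset_closure <| by
      rw [sUnion_insert]
      exact insert_subset (Or.inl heF') subset_union_right
  have hK : M.linkClass L e ∈ 𝒟 :=
    hS'.linkClass_mem (insert_subset hF' fun K hK => hTS' hK.1) (toFinite _) (hFL heF.2.1)
  have hFK : F ⊆ M.linkClass L e := subset_linkClass
    (fun _ hx _ hy => (hS.1.linked hm.1 hx hy).mono hFL) heF.2.1 (mem_linkClass_self M L e)
  obtain hK | ⟨hKT, hKG⟩ := hK
  · exact hK ▸ hFK
  · exact absurd (hG.2.2 _ hKT (mem_linkClass_self M L e)) hKG.not_subset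

end Tropical

end Mobility

/-- A tropical vertex `v` of `C(x)` has at most one mobile flat across all resolutions
of its topology: mobile flats of any two resolutions coincide. -/
theorem stmt16 [Fintype α] [Nonempty α] (M : Matroid α) (hE : M.E = Set.univ)
    (hloop : ∀ e, M.Indep {e}) (x v : α → ℝ) (hv : TropVertex M x v)
    (T S₁ S₂ : Set (Set α)) (hT : IsTopologyOf M v T)
    (hS₁ : MResolution M T S₁) (hS₂ : MResolution M T S₂)
    (a₁ a₂ : Set α → ℝ) (ha₁ : Compat S₁ a₁) (ha₂ : Compat S₂ a₂)
    (hr₁ : Represents M S₁ a₁ v) (hr₂ : Represents M S₂ a₂ v)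
    (F₁ F₂ : Set α) (hm₁ : Mobile M x S₁ a₁ v F₁) (hm₂ : Mobile M x S₂ a₂ v F₂) :
    F₁ = F₂ := by
  have : M.Loopless :=
    Matroid.loopless_iff_forall_isNonloop.2 fun e _ => Matroid.indep_singleton.1 (hloop e)
  obtain ⟨e, he₁, he₂⟩ := hv.exists_minMem_of_mobile hE hr₁ hr₂ hm₁ hm₂
  obtain ⟨-, aT, -, hrT⟩ := hT
  obtain ⟨G, hG, -⟩ := hrT e (hE ▸ Set.mem_univ e)
  exact (hm₁.subset_of_minMem hS₁ ha₁ hr₁ he₁ hrT hG hS₂.1 hS₂.2.1 hm₂.1 he₂.2.1).antisymm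
    (hm₂.subset_of_minMem hS₂ ha₂ hr₂ he₂ hrT hG hS₁.1 hS₁.2.1 hm₁.1 he₁.2.1)
end
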